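/- arXiv:2007.15547 — 10 statements merged into one kernel-verified Lean document; each statement's English description precedes it below -/
import Mathlib

section
/- Let R be a commutative Noetherian ring generated as a ring by finitely many elements x_1, ..., x_k, and let D be a finitely generated R-module. Then D is finite (as a set) if and only if (1) some positive integer N annihilates D, and (2) for each i there exist natural numbers n_i < m_i with (x_i^{m_i} - x_i^{n_i}) annihilating D. -/
theorem finite_module_iff_annihilator (R : Type*) [CommRing R] [IsNoetherianRing R]
    (k : ℕ) (x : Fin k → R) (hx : Subring.closure (Set.range x) = ⊤)
    (D : Type*) [AddCommGroup D] [Module R D] [Module.Finite R D] :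
    Finite D ↔
      ((∃ N : ℕ, 0 < N ∧ (N : R) ∈ (⊤ : Submodule R D).annihilator) ∧
        ∀ i : Fin k, ∃ n m : ℕ, n < m ∧
          (x i ^ m - x i ^ n) ∈ (⊤ : Submodule R D).annihilator) := by
  constructor
  · intro hD
    constructor
    · refine ⟨Nat.card D, Nat.card_pos, ?_⟩
      rw [Submodule.mem_annihilator]
      intro d _
      rw [Nat.cast_smul_eq_nsmul]
      exact card_nsmul_eq_zero'
    · intro i
      obtain ⟨a, b, hne, hab⟩ :=
        Finite.exists_ne_map_eq_of_infinite (fun n : ℕ => fun d : D => x i ^ n • d)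
      rcases hne.lt_or_gt with h | h
      · refine ⟨a, b, h, ?_⟩
        rw [Submodule.mem_annihilator]
        intro d _
        have := congrFun hab d
        simp only [sub_smul]
        rw [this, sub_self]
      · refine ⟨b, a, h, ?_⟩
        rw [Submodule.mem_annihilator]
        intro d _
        have := congrFun hab d
        simp only [sub_smul]
        rw [this, sub_self]
  · rintro ⟨⟨N, hN, hNann⟩, hX⟩
    set I := (⊤ : Submodule R D).annihilator with hI
    let A := R ⧸ I
    have hNI : (N : R) ∈ I := hNann
    have hNA : ∀ a : A, N • a = 0 := by
      intro a
      obtain ⟨r, rfl⟩ := Ideal.Quotient.mk_surjective a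
      rw [← map_nsmul, Ideal.Quotient.eq_zero_iff_mem]
      have : (N : R) * r ∈ I := Ideal.mul_mem_right r I hNI
      simpa [nsmul_eq_mul] using this
    have hclos : Subring.closure (Set.range fun i => (Ideal.Quotient.mk I (x i))) = ⊤ := by
      have h1 := RingHom.map_closure (Ideal.Quotient.mk I : R →+* A) (Set.range x)
      rw [hx] at h1
      have h2 : Subring.map (Ideal.Quotient.mk I : R →+* A) ⊤ = ⊤ := by
        ext a
        simp only [Subring.mem_top, iff_true, Subring.mem_map]
        exact ⟨(Ideal.Quotient.mk_surjective a).choose, trivial,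
          (Ideal.Quotient.mk_surjective a).choose_spec⟩
      rw [h2] at h1
      have h3 : (Set.range fun i => (Ideal.Quotient.mk I (x i))) =
          (Ideal.Quotient.mk I : R →+* A) '' Set.range x := by
        rw [← Set.range_comp]; rfl
      rw [h3, ← h1]
    have hint : ∀ s ∈ Set.range fun i => (Ideal.Quotient.mk I (x i)), IsIntegral ℤ s := by
      rintro _ ⟨i, rfl⟩
      obtain ⟨n, m, hnm, hann⟩ := hX i
      refine ⟨Polynomial.X ^ m - Polynomial.X ^ n, ?_, ?_⟩
      · have : (Polynomial.X ^ n : Polynomial ℤ).degree < (Polynomial.X ^ m : Polynomial ℤ).degree := by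
          simpa [Polynomial.degree_X_pow] using (by exact_mod_cast hnm : (n : WithBot ℕ) < m)
        exact (Polynomial.monic_X_pow m).sub_of_left this
      · simp only [Polynomial.eval₂_sub, Polynomial.eval₂_X_pow]
        rw [← map_pow, ← map_pow, ← map_sub, Ideal.Quotient.eq_zero_iff_mem]
        exact hann
    have hadj : Algebra.adjoin ℤ (Set.range fun i => (Ideal.Quotient.mk I (x i))) = ⊤ := by
      erw [Algebra.adjoin_int (R := A), hclos]
      rfl
    have hfg : (⊤ : Submodule ℤ A).FG := by
      have := fg_adjoin_of_finite (Set.finite_range _) hint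
      rwa [hadj] at this
    have : Module.Finite ℤ A := ⟨hfg⟩
    have hAfin : Finite A := by
      apply Module.finite_of_fg_torsion
      intro a
      refine ⟨⟨(N : ℤ), mem_nonZeroDivisors_of_ne_zero (by exact_mod_cast hN.ne')⟩, ?_⟩
      simpa using hNA a
    obtain ⟨s, f, hf⟩ := Module.Finite.exists_fin (R := R) (M := D)
    have hsur := Ideal.Quotient.mk_surjective (I := I)
    let lift : A → R := fun a => (hsur a).choose
    have hlift : ∀ a : A, Ideal.Quotient.mk I (lift a) = a := fun a => (hsur a).choose_spec
    let g : (Fin s → A) → D := fun a => ∑ j, ((lift (a j) • f j : D))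
    have hg : Function.Surjective g := by
      intro d
      have hd : d ∈ Submodule.span R (Set.range f) := hf ▸ Submodule.mem_top
      rw [Submodule.mem_span_range_iff_exists_fun R] at hd
      obtain ⟨c, rfl⟩ := hd
      refine ⟨fun j => Ideal.Quotient.mk I (c j), ?_⟩
      show (∑ j, lift (Ideal.Quotient.mk I (c j)) • f j) = _
      refine Finset.sum_congr rfl fun j _ => ?_
      have hmem : lift (Ideal.Quotient.mk I (c j)) - c j ∈ I := by
        rw [← Ideal.Quotient.eq]
        exact hlift _
      have := Submodule.mem_annihilator.mp hmem (f j) Submodule.mem_top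
      rw [sub_smul, sub_eq_zero] at this
      exact this
    exact Finite.of_surjective g hg
end

section
/- Let R be a commutative Noetherian ring and I, J ideals of R. Then the depth of the intersection satisfies I*(I ∩ J) = I*(I) ∩ I*(J), where I*(L) denotes the unique ideal maximal with respect to containing L with finite quotient L*(L)/L. -/
/-- `IsDepth L D` means that `D` is the depth of the ideal `L`: it contains `L`,
the quotient `D/L` (identified with the image of `D` in `R/L`) is finite, and `D`
is the largest ideal with these two properties. -/
def IsDepth {R : Type*} [CommRing R] (L D : Ideal R) : Prop :=
  L ≤ D ∧ Finite (D.map (Ideal.Quotient.mk L)) ∧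
    ∀ D' : Ideal R, L ≤ D' → Finite (D'.map (Ideal.Quotient.mk L)) → D' ≤ D

lemma coeSet_map_mk {R : Type*} [CommRing R] (L D : Ideal R) :
    ((D.map (Ideal.Quotient.mk L)) : Set (R ⧸ L)) = Ideal.Quotient.mk L '' D := by
  ext x
  simp only [SetLike.mem_coe,
    Ideal.mem_map_iff_of_surjective _ Ideal.Quotient.mk_surjective, Set.mem_image]

lemma finite_map_iff {R : Type*} [CommRing R] (L D : Ideal R) :
    Finite (D.map (Ideal.Quotient.mk L)) ↔ (Ideal.Quotient.mk L '' D).Finite := by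
  rw [← coeSet_map_mk]
  exact Set.finite_coe_iff

lemma finite_map_of_le {R : Type*} [CommRing R] {L L' : Ideal R} (h : L ≤ L') (D : Ideal R)
    (hD : Finite (D.map (Ideal.Quotient.mk L))) :
    Finite (D.map (Ideal.Quotient.mk L')) := by
  rw [finite_map_iff] at hD ⊢
  have : Ideal.Quotient.mk L' '' D =
      Ideal.Quotient.factor (S := L) (T := L') h '' (Ideal.Quotient.mk L '' D) := by
    rw [← Set.image_comp, ← RingHom.coe_comp, Ideal.Quotient.factor_comp_mk]
  rw [this]
  exact hD.image _

theorem depth_inf (R : Type*) [CommRing R] [IsNoetherianRing R]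
    (I J DI DJ DIJ : Ideal R)
    (hI : IsDepth I DI) (hJ : IsDepth J DJ) (hIJ : IsDepth (I ⊓ J) DIJ) :
    DIJ = DI ⊓ DJ := by
  apply le_antisymm
  · refine le_inf ?_ ?_
    · have : DIJ ⊔ I ≤ DI := by
        apply hI.2.2 _ le_sup_right
        rw [Ideal.map_sup, Ideal.map_quotient_self, sup_bot_eq]
        exact finite_map_of_le inf_le_left _ hIJ.2.1
      exact le_trans le_sup_left this
    · have : DIJ ⊔ J ≤ DJ := by
        apply hJ.2.2 _ le_sup_right
        rw [Ideal.map_sup, Ideal.map_quotient_self, sup_bot_eq]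
        exact finite_map_of_le inf_le_right _ hIJ.2.1
      exact le_trans le_sup_left this
  · apply hIJ.2.2 _ (le_inf (le_trans inf_le_left hI.1) (le_trans inf_le_right hJ.1))
    rw [finite_map_iff]
    set g : R ⧸ (I ⊓ J) → (R ⧸ I) × (R ⧸ J) := fun x =>
      (Ideal.Quotient.factor (S := I ⊓ J) (T := I) inf_le_left x, Ideal.Quotient.factor (S := I ⊓ J) (T := J) inf_le_right x)
      with hg
    have hginj : Function.Injective g := by
      intro x y hxy
      obtain ⟨a, rfl⟩ := Ideal.Quotient.mk_surjective x
      obtain ⟨b, rfl⟩ := Ideal.Quotient.mk_surjective y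
      simp only [hg, Prod.mk.injEq,
        ← RingHom.comp_apply, Ideal.Quotient.factor_comp_mk] at hxy
      rw [Ideal.Quotient.mk_eq_mk_iff_sub_mem] at hxy ⊢
      rw [Ideal.Quotient.mk_eq_mk_iff_sub_mem] at hxy
      exact ⟨hxy.1, hxy.2⟩
    have hsub : g '' (Ideal.Quotient.mk (I ⊓ J) '' ↑(DI ⊓ DJ)) ⊆
        (Ideal.Quotient.mk I '' DI) ×ˢ (Ideal.Quotient.mk J '' DJ) := by
      rintro _ ⟨_, ⟨a, ha, rfl⟩, rfl⟩
      constructor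
      · exact ⟨a, ha.1, (congrArg (fun f : R →+* R ⧸ I => f a)
          (Ideal.Quotient.factor_comp_mk (S := I ⊓ J) (T := I) inf_le_left))⟩
      · exact ⟨a, ha.2, (congrArg (fun f : R →+* R ⧸ J => f a)
          (Ideal.Quotient.factor_comp_mk (S := I ⊓ J) (T := J) inf_le_right))⟩
    have hfin : (g '' (Ideal.Quotient.mk (I ⊓ J) '' ↑(DI ⊓ DJ))).Finite := by
      refine Set.Finite.subset (Set.Finite.prod ?_ ?_) hsub
      · exact (finite_map_iff I DI).mp hI.2.1
      · exact (finite_map_iff J DJ).mp hJ.2.1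
    exact Set.Finite.of_finite_image hfin hginj.injOn
end

section
/- Let R be a commutative Noetherian ring and I, J ideals with J ⊆ I. Then the depth ideals satisfy I*(J) ⊆ I*(I). -/
theorem depth_mono (R : Type*) [CommRing R] [IsNoetherianRing R]
    (I J DI DJ : Ideal R) (hJI : J ≤ I)
    (hI : IsDepth I DI) (hJ : IsDepth J DJ) :
    DJ ≤ DI := by
  have hDJfin : Finite (DJ.map (Ideal.Quotient.mk J)) := hJ.2.1
  set f := Ideal.Quotient.factor hJI with hf
  have hmap : DJ.map (Ideal.Quotient.mk I) = (DJ.map (Ideal.Quotient.mk J)).map f := by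
    rw [Ideal.map_map, Ideal.Quotient.factor_comp_mk]
  have hfin : Finite (DJ.map (Ideal.Quotient.mk I)) := by
    rw [hmap]
    have hsurj : Function.Surjective f := fun y => by
        obtain ⟨x, rfl⟩ := Ideal.Quotient.mk_surjective y
        exact ⟨Ideal.Quotient.mk J x, rfl⟩
    have : Function.Surjective
        (fun x : (DJ.map (Ideal.Quotient.mk J)) =>
          (⟨f x, Ideal.mem_map_of_mem f x.2⟩ :
            ((DJ.map (Ideal.Quotient.mk J)).map f))) := by
      rintro ⟨y, hy⟩
      obtain ⟨x, hx, rfl⟩ := (Ideal.mem_map_iff_of_surjective f hsurj).mp hy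
      exact ⟨⟨x, hx⟩, rfl⟩
    exact Finite.of_surjective _ this
  have hsupfin : Finite ((DJ ⊔ I).map (Ideal.Quotient.mk I)) := by
    rwa [Ideal.map_sup, Ideal.map_quotient_self, sup_bot_eq]
  exact le_trans le_sup_left (hI.2.2 (DJ ⊔ I) le_sup_right hsupfin)
end

section
/- Let R be a commutative Noetherian ring and I, J ideals. Then I*(I) = I*(J) if and only if I and J are commensurable, i.e. both I/(I ∩ J) and J/(I ∩ J) are finite. -/
section Helpers

variable {R : Type*} [CommRing R]

lemma ideal_finite_iff_set_finite {S : Type*} [CommRing S] (I : Ideal S) :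
    Finite I ↔ (I : Set S).Finite := by
  rw [← Set.finite_coe_iff]
  exact Iff.rfl

lemma coe_map_of_surj {S : Type*} [CommRing S] (f : R →+* S) (hf : Function.Surjective f)
    (I : Ideal R) : ((I.map f : Ideal S) : Set S) = f '' (I : Set R) := by
  ext x
  constructor
  · intro hx
    obtain ⟨a, ha, rfl⟩ := (Ideal.mem_map_iff_of_surjective f hf).mp hx
    exact ⟨a, ha, rfl⟩
  · rintro ⟨a, ha, rfl⟩
    exact Ideal.mem_map_of_mem f ha

lemma finite_of_image_of_fibers {α β : Type*} {f : α → β} {S : Set α}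
    (him : (f '' S).Finite) (hfib : ∀ b, (S ∩ f ⁻¹' {b}).Finite) : S.Finite := by
  have hsub : S ⊆ ⋃ b ∈ f '' S, S ∩ f ⁻¹' {b} := fun x hx =>
    Set.mem_biUnion (Set.mem_image_of_mem f hx) ⟨hx, rfl⟩
  exact (him.biUnion fun b _ => hfib b).subset hsub

/-- If `L'/L` and `D/L'` are finite, then `D/L` is finite. -/
lemma finite_map_of_finite_finite {L L' D : Ideal R} (h : L ≤ L')
    (hL' : ((L'.map (Ideal.Quotient.mk L) : Ideal (R ⧸ L)) : Set (R ⧸ L)).Finite)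
    (hD : ((D.map (Ideal.Quotient.mk L') : Ideal (R ⧸ L')) : Set (R ⧸ L')).Finite) :
    ((D.map (Ideal.Quotient.mk L) : Ideal (R ⧸ L)) : Set (R ⧸ L)).Finite := by
  set f := Ideal.Quotient.factor (S := L) (T := L') h with hf
  apply finite_of_image_of_fibers (f := f)
  · have h1 : ((D.map (Ideal.Quotient.mk L) : Ideal (R ⧸ L)) : Set (R ⧸ L))
        = Ideal.Quotient.mk L '' (D : Set R) :=
      coe_map_of_surj _ Ideal.Quotient.mk_surjective D
    have h2 : ((D.map (Ideal.Quotient.mk L') : Ideal (R ⧸ L')) : Set (R ⧸ L'))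
        = Ideal.Quotient.mk L' '' (D : Set R) :=
      coe_map_of_surj _ Ideal.Quotient.mk_surjective D
    rw [h1, ← Set.image_comp]
    have hcomp : f ∘ Ideal.Quotient.mk L = Ideal.Quotient.mk L' :=
      funext fun x => Ideal.Quotient.factor_mk (S := L) (T := L') h x
    rw [hcomp, ← h2]
    exact hD
  · intro b
    by_cases hb : (((D.map (Ideal.Quotient.mk L) : Ideal (R ⧸ L)) : Set (R ⧸ L))
        ∩ f ⁻¹' {b}).Nonempty
    · obtain ⟨x₀, hx₀S, hx₀b⟩ := hb
      have hsub : ((D.map (Ideal.Quotient.mk L) : Ideal (R ⧸ L)) : Set (R ⧸ L)) ∩ f ⁻¹' {b}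
          ⊆ (fun y => x₀ + y) '' ((L'.map (Ideal.Quotient.mk L) : Ideal (R ⧸ L)) : Set (R ⧸ L)) := by
        rintro x ⟨hxS, hxb⟩
        obtain ⟨d, hd, rfl⟩ := (Ideal.mem_map_iff_of_surjective _
          Ideal.Quotient.mk_surjective).mp hxS
        obtain ⟨d₀, hd₀, rfl⟩ := (Ideal.mem_map_iff_of_surjective _
          Ideal.Quotient.mk_surjective).mp hx₀S
        have heq : Ideal.Quotient.mk L' d = Ideal.Quotient.mk L' d₀ := by
          have h1 : f (Ideal.Quotient.mk L d) = b := hxb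
          have h2 : f (Ideal.Quotient.mk L d₀) = b := hx₀b
          rw [hf, Ideal.Quotient.factor_mk] at h1 h2
          rw [h1, h2]
        have hdd : d - d₀ ∈ L' := by
          rwa [Ideal.Quotient.eq] at heq
        refine ⟨Ideal.Quotient.mk L (d - d₀), Ideal.mem_map_of_mem _ hdd, ?_⟩
        simp only [map_sub]
        ring
      exact ((hL'.image _).subset hsub)
    · rw [Set.not_nonempty_iff_eq_empty] at hb
      rw [hb]
      exact Set.finite_empty

/-- Finiteness of `D/L` pushes forward along `L ≤ L'` to finiteness of `D/L'`. -/
lemma finite_map_factor {L L' D : Ideal R} (h : L ≤ L')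
    (hD : ((D.map (Ideal.Quotient.mk L) : Ideal (R ⧸ L)) : Set (R ⧸ L)).Finite) :
    ((D.map (Ideal.Quotient.mk L') : Ideal (R ⧸ L')) : Set (R ⧸ L')).Finite := by
  rw [coe_map_of_surj _ Ideal.Quotient.mk_surjective] at hD ⊢
  have : Ideal.Quotient.mk L' '' (D : Set R)
      = Ideal.Quotient.factor (S := L) (T := L') h '' (Ideal.Quotient.mk L '' (D : Set R)) := by
    rw [← Set.image_comp, show (Ideal.Quotient.factor (S := L) (T := L') h ∘ Ideal.Quotient.mk L)
      = Ideal.Quotient.mk L' from funext fun x => Ideal.Quotient.factor_mk (S := L) (T := L') h x]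
  rw [this]
  exact hD.image _

lemma sup_set_finite {A B : Ideal R} (hA : (A : Set R).Finite) (hB : (B : Set R).Finite) :
    ((A ⊔ B : Ideal R) : Set R).Finite := by
  have hsub : ((A ⊔ B : Ideal R) : Set R) ⊆ Set.image2 (· + ·) (A : Set R) (B : Set R) := by
    intro x hx
    obtain ⟨a, ha, b, hb, rfl⟩ := Submodule.mem_sup.mp hx
    exact ⟨a, ha, b, hb, rfl⟩
  exact (hA.image2 _ hB).subset hsub

/-- If `I ≤ D` and `D/J` is finite, then `I/(I ⊓ J)` is finite. -/
lemma finite_inf_of_le {I J D : Ideal R} (hID : I ≤ D)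
    (hD : ((D.map (Ideal.Quotient.mk J) : Ideal (R ⧸ J)) : Set (R ⧸ J)).Finite) :
    ((I.map (Ideal.Quotient.mk (I ⊓ J)) : Ideal (R ⧸ (I ⊓ J))) : Set (R ⧸ (I ⊓ J))).Finite := by
  set f := Ideal.Quotient.factor (S := I ⊓ J) (T := J) inf_le_right with hf
  apply Set.Finite.of_finite_image (f := f) ?_ ?_
  · apply hD.subset
    rintro y ⟨x, hx, rfl⟩
    obtain ⟨a, ha, rfl⟩ := (Ideal.mem_map_iff_of_surjective _
      Ideal.Quotient.mk_surjective).mp hx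
    rw [hf, Ideal.Quotient.factor_mk]
    exact Ideal.mem_map_of_mem _ (hID ha)
  · intro x hx y hy hxy
    obtain ⟨a, ha, rfl⟩ := (Ideal.mem_map_iff_of_surjective _
      Ideal.Quotient.mk_surjective).mp hx
    obtain ⟨b, hb, rfl⟩ := (Ideal.mem_map_iff_of_surjective _
      Ideal.Quotient.mk_surjective).mp hy
    rw [hf, Ideal.Quotient.factor_mk, Ideal.Quotient.factor_mk, Ideal.Quotient.eq] at hxy
    rw [Ideal.Quotient.eq]
    exact ⟨I.sub_mem ha hb, hxy⟩

/-- One-sided comparison of depths under commensurability. -/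
lemma depth_le_depth {I J DI DJ : Ideal R} (hI : IsDepth I DI) (hJ : IsDepth J DJ)
    (h1 : ((I.map (Ideal.Quotient.mk (I ⊓ J)) : Ideal (R ⧸ (I ⊓ J))) : Set (R ⧸ (I ⊓ J))).Finite)
    (h2 : ((J.map (Ideal.Quotient.mk (I ⊓ J)) : Ideal (R ⧸ (I ⊓ J))) : Set (R ⧸ (I ⊓ J))).Finite) :
    DI ≤ DJ := by
  obtain ⟨hIle, hIfin, hImax⟩ := hI
  obtain ⟨hJle, hJfin, hJmax⟩ := hJ
  rw [ideal_finite_iff_set_finite] at hIfin hJfin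
  -- J/(I ⊓ J) finite gives (J + I)/I finite, i.e. J.map (mk I) finite
  have hJI : ((J.map (Ideal.Quotient.mk I) : Ideal (R ⧸ I)) : Set (R ⧸ I)).Finite :=
    finite_map_factor inf_le_left h2
  -- J ≤ DI by maximality of DI applied to DI ⊔ J
  have hJDI : J ≤ DI := by
    have hsup : DI ⊔ J ≤ DI := by
      apply hImax (DI ⊔ J) (le_trans hIle le_sup_left)
      rw [ideal_finite_iff_set_finite, Ideal.map_sup]
      exact sup_set_finite hIfin hJI
    exact le_trans le_sup_right hsup
  -- DI/(I ⊓ J) is finite (extension of DI/I by I/(I ⊓ J))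
  have hDIinf : ((DI.map (Ideal.Quotient.mk (I ⊓ J)) : Ideal (R ⧸ (I ⊓ J)))
      : Set (R ⧸ (I ⊓ J))).Finite :=
    finite_map_of_finite_finite inf_le_left h1 hIfin
  -- hence DI/J is finite
  have hDIJ : ((DI.map (Ideal.Quotient.mk J) : Ideal (R ⧸ J)) : Set (R ⧸ J)).Finite :=
    finite_map_factor inf_le_right hDIinf
  exact hJmax DI hJDI ((ideal_finite_iff_set_finite _).mpr hDIJ)

end Helpers

theorem depth_eq_iff_commensurable (R : Type*) [CommRing R] [IsNoetherianRing R]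
    (I J DI DJ : Ideal R) (hI : IsDepth I DI) (hJ : IsDepth J DJ) :
    DI = DJ ↔
      (Finite (I.map (Ideal.Quotient.mk (I ⊓ J))) ∧
        Finite (J.map (Ideal.Quotient.mk (I ⊓ J)))) := by
  simp only [ideal_finite_iff_set_finite]
  constructor
  · rintro rfl
    obtain ⟨hIle, hIfin, hImax⟩ := hI
    obtain ⟨hJle, hJfin, hJmax⟩ := hJ
    rw [ideal_finite_iff_set_finite] at hIfin hJfin
    refine ⟨finite_inf_of_le hIle hJfin, ?_⟩
    have := finite_inf_of_le (I := J) (J := I) hJle hIfin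
    rwa [inf_comm J I] at this
  · rintro ⟨h1, h2⟩
    have h1' := h1
    have h2' := h2
    rw [inf_comm I J] at h1' h2'
    exact le_antisymm (depth_le_depth hI hJ h1 h2) (depth_le_depth hJ hI h2' h1')
end

section
/- Let R be a commutative Noetherian ring finitely generated as a ring, and let J ⊆ I be ideals of R. Then I/J is finite if and only if the ideal quotient J : I has finite index in R (i.e. R/(J : I) is finite). -/
theorem finite_iff_quotient_annihilator_finite {R M : Type*} [CommRing R] [AddCommGroup M]
    [Module R M] [Module.Finite R M] :
    Finite M ↔ Finite (R ⧸ Module.annihilator R M) := by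
  constructor
  · intro h
    have hEnd : Finite (AddMonoid.End M) :=
      Finite.of_injective _ (DFunLike.coe_injective (F := AddMonoid.End M))
    have hker : Module.annihilator R M = RingHom.ker (Module.toAddMonoidEnd R M) := rfl
    rw [hker]
    exact Finite.of_injective _ (RingHom.kerLift_injective (Module.toAddMonoidEnd R M))
  · intro h
    letI := (Module.isTorsionBySet_annihilator R M).module
    have : Module.Finite (R ⧸ Module.annihilator R M) M :=
      Module.Finite.of_restrictScalars_finite R _ M
    exact Module.finite_of_finite (R ⧸ Module.annihilator R M)

theorem finite_quotient_iff_colon_finite_index (R : Type*) [CommRing R] [IsNoetherianRing R]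
    (k : ℕ) (x : Fin k → R) (hx : Subring.closure (Set.range x) = ⊤)
    (I J : Ideal R) (hJI : J ≤ I) :
    Finite (I.map (Ideal.Quotient.mk J)) ↔ Finite (R ⧸ J.colon I) := by
  have hcar : ∀ y : R ⧸ J, y ∈ I.map (Ideal.Quotient.mk J) ↔ y ∈ Submodule.map J.mkQ I := by
    intro y
    rw [Ideal.map_eq_submodule_map]
    rfl
  have hFG : (Submodule.map J.mkQ I).FG := (IsNoetherian.noetherian I).map J.mkQ
  haveI : Module.Finite R ↥(Submodule.map J.mkQ I) := Module.Finite.iff_fg.mpr hFG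
  have hcolon : J.colon I = Module.annihilator R ↥(Submodule.map J.mkQ I) :=
    (Submodule.annihilator_map_mkQ_eq_colon (N := J) (P := I)).symm
  rw [(Equiv.subtypeEquivRight hcar).finite_iff, hcolon]
  exact finite_iff_quotient_annihilator_finite
end

section
/- Let R be a commutative Noetherian ring finitely generated as a ring, and let J ⊆ I be ideals with I/J finite. Then I / ((J:I)·I) is finite. -/
theorem finite_quotient_by_colon_mul (R : Type*) [CommRing R] [IsNoetherianRing R]
    (k : ℕ) (x : Fin k → R) (hx : Subring.closure (Set.range x) = ⊤)
    (I J : Ideal R) (hJI : J ≤ I)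
    (hfin : Finite (I.map (Ideal.Quotient.mk J))) :
    Finite (I.map (Ideal.Quotient.mk ((J.colon I) * I))) := by
  classical
  set A := J.colon I with hA
  set K := A * I with hK
  -- M := I/J as an R-module
  set M : Submodule R (R ⧸ J) := Submodule.restrictScalars R (I.map (Ideal.Quotient.mk J)) with hM
  have hMfin : Finite M := hfin
  -- the action ring hom
  let f : R →+* AddMonoid.End M := Module.toAddMonoidEnd R M
  have hker : RingHom.ker f = A := by
    ext r
    constructor
    · intro hr
      rw [hA, Submodule.mem_colon]
      intro p hp
      have h0 : f r = 0 := hr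
      have : f r ⟨Ideal.Quotient.mk J p, Ideal.mem_map_of_mem _ hp⟩ = 0 := by rw [h0]; rfl
      have : (r • (⟨Ideal.Quotient.mk J p, Ideal.mem_map_of_mem _ hp⟩ : M) : M) = 0 := this
      have h2 : (Ideal.Quotient.mk J (r * p) : R ⧸ J) = 0 := by
        have := congrArg Subtype.val this
        simpa [Submodule.coe_smul, Algebra.smul_def] using this
      rwa [Ideal.Quotient.eq_zero_iff_mem] at h2
    · intro hr
      rw [RingHom.mem_ker]
      refine DFunLike.ext _ _ fun q => ?_
      obtain ⟨q, hm⟩ := q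
      rw [Submodule.restrictScalars_mem] at hm
      rw [Ideal.mem_map_iff_of_surjective _ Ideal.Quotient.mk_surjective] at hm
      obtain ⟨p, hp, rfl⟩ := hm
      have : r * p ∈ J := by rw [hA, Submodule.mem_colon] at hr; exact hr p hp
      show (r • (⟨Ideal.Quotient.mk J p, hm⟩ : M)) = 0
      refine Subtype.ext ?_
      show r • (Ideal.Quotient.mk J p) = 0
      rw [Algebra.smul_def, Ideal.Quotient.algebraMap_eq, ← map_mul]
      simpa using Ideal.Quotient.eq_zero_iff_mem.2 this
  have hRA : Finite (R ⧸ A) := by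
    have : Finite (AddMonoid.End M) :=
      Finite.of_injective (fun e => (e : M → M)) DFunLike.coe_injective
    have h := Finite.of_injective _ (RingHom.kerLift_injective f)
    rwa [hker] at h
  -- I is finitely generated
  obtain ⟨m, g, hg⟩ : ∃ (m : ℕ) (g : Fin m → R), Submodule.span R (Set.range g) = I :=
    Submodule.fg_iff_exists_fin_generating_family.mp (IsNoetherian.noetherian I)
  -- surjection from (Fin n → R ⧸ A)
  set G : (Fin m → R ⧸ A) → (I.map (Ideal.Quotient.mk K)) := fun c =>
    ⟨Ideal.Quotient.mk K (∑ i, (c i).out * g i), by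
      refine Ideal.mem_map_of_mem _ (Ideal.sum_mem _ fun i _ => ?_)
      exact I.mul_mem_left _ (hg ▸ Submodule.subset_span ⟨i, rfl⟩)⟩
  have hGsurj : Function.Surjective G := by
    rintro ⟨y, hy⟩
    rw [Ideal.mem_map_iff_of_surjective _ Ideal.Quotient.mk_surjective] at hy
    obtain ⟨p, hp, rfl⟩ := hy
    rw [← hg, Submodule.mem_span_range_iff_exists_fun] at hp
    obtain ⟨c, hc⟩ := hp
    refine ⟨fun i => Ideal.Quotient.mk A (c i), Subtype.ext ?_⟩
    show Ideal.Quotient.mk K (∑ i, _ * g i) = Ideal.Quotient.mk K p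
    rw [Ideal.Quotient.eq, ← hc]
    have : (∑ i, (Ideal.Quotient.mk A (c i)).out * g i) - (∑ i, c i • g i)
        = ∑ i, ((Ideal.Quotient.mk A (c i)).out - c i) * g i := by
      rw [← Finset.sum_sub_distrib]
      congr 1; ext i; ring_nf
    rw [this]
    refine Ideal.sum_mem _ fun i _ => ?_
    refine Ideal.mul_mem_mul ?_ (hg ▸ Submodule.subset_span ⟨i, rfl⟩)
    rw [← Ideal.Quotient.eq_zero_iff_mem, map_sub, sub_eq_zero]
    exact Quotient.out_eq _
  exact Finite.of_surjective G hGsurj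
end

section
/- Let R be a commutative Noetherian ring finitely generated as a ring, and L ⊆ J ⊆ I ideals of R. If I/J is finite and J/L is infinite, then (J : I)/(L : I) is infinite. -/
theorem infinite_colon_quotient (R : Type*) [CommRing R] [IsNoetherianRing R]
    (k : ℕ) (x : Fin k → R) (hx : Subring.closure (Set.range x) = ⊤)
    (I J L : Ideal R) (hLJ : L ≤ J) (hJI : J ≤ I)
    (hfin : Finite (I.map (Ideal.Quotient.mk J)))
    (hinf : Infinite (J.map (Ideal.Quotient.mk L))) :
    Infinite ((J.colon I).map (Ideal.Quotient.mk (L.colon I))) := by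
  by_contra hnot
  rw [not_infinite_iff_finite] at hnot
  obtain ⟨s, hs⟩ := IsNoetherian.noetherian I
  have hsI : ∀ i ∈ s, i ∈ I := fun i hi => hs ▸ Submodule.subset_span hi
  haveI := hfin
  haveI := hinf
  -- key: if r * i ∈ K for all generators i of I, then r ∈ K.colon I
  have key : ∀ (K : Ideal R) (r : R), (∀ i ∈ s, r * i ∈ K) → r ∈ K.colon I := by
    intro K r h
    rw [Submodule.mem_colon]
    intro p hp
    rw [← hs] at hp
    induction hp using Submodule.span_induction with
    | mem y hy => exact h y hy
    | zero => simp
    | add y z _ _ hy hz => rw [smul_add]; exact K.add_mem hy hz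
    | smul c y _ hy => rw [smul_comm]; exact K.smul_mem c hy
  -- Step A : R ⧸ (J : I) is finite
  have hmk1 := Ideal.Quotient.mk_surjective (I := J.colon I)
  set out1 := Function.surjInv hmk1 with hout1def
  have hout1 : ∀ q, Ideal.Quotient.mk (J.colon I) (out1 q) = q := Function.surjInv_eq hmk1
  have hA : Finite (R ⧸ J.colon I) := by
    have hβ : Function.Injective (fun (q : R ⧸ J.colon I) (i : s) =>
        (⟨Ideal.Quotient.mk J (out1 q * i), Ideal.mem_map_of_mem _ (I.mul_mem_left _ (hsI i i.2))⟩ :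
          I.map (Ideal.Quotient.mk J))) := by
      intro q q' h
      have hsub : out1 q - out1 q' ∈ J.colon I := by
        apply key
        intro i hi
        have h2 : Ideal.Quotient.mk J (out1 q * i) = Ideal.Quotient.mk J (out1 q' * i) :=
          congrArg Subtype.val (congrFun h ⟨i, hi⟩)
        rw [sub_mul]
        exact Ideal.Quotient.eq.mp h2
      calc q = Ideal.Quotient.mk _ (out1 q) := (hout1 q).symm
        _ = Ideal.Quotient.mk _ (out1 q') := Ideal.Quotient.eq.mpr hsub
        _ = q' := hout1 q'
    exact Finite.of_injective _ hβ
  -- Step B : R ⧸ (L : I) is finite, using the contradiction hypothesis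
  haveI := hA
  haveI := hnot
  have hNM : L.colon I ≤ J.colon I := Submodule.colon_mono hLJ le_rfl
  have hB : Finite (R ⧸ L.colon I) := by
    set π := Ideal.Quotient.factor hNM with hπdef
    have hπ0 : ∀ q : R ⧸ L.colon I, π q = 0 →
        q ∈ (J.colon I).map (Ideal.Quotient.mk (L.colon I)) := by
      intro q hq
      obtain ⟨r, rfl⟩ := Ideal.Quotient.mk_surjective q
      rw [Ideal.Quotient.factor_mk] at hq
      exact Ideal.mem_map_of_mem _ (Ideal.Quotient.eq_zero_iff_mem.mp hq)
    have hπs : Function.Surjective π := by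
      intro q
      obtain ⟨r, rfl⟩ := Ideal.Quotient.mk_surjective q
      exact ⟨Ideal.Quotient.mk _ r, Ideal.Quotient.factor_mk _ _⟩
    set σ := Function.surjInv hπs with hσdef
    have hσ : ∀ q, π (σ q) = q := Function.surjInv_eq hπs
    have hg : Function.Injective (fun q : R ⧸ L.colon I =>
        ((π q, ⟨q - σ (π q), hπ0 _ (by simp [map_sub, hσ])⟩) :
          (R ⧸ J.colon I) × ((J.colon I).map (Ideal.Quotient.mk (L.colon I))))) := by
      intro q q' h
      have h1 : π q = π q' := congrArg Prod.fst h
      have h2 : q - σ (π q) = q' - σ (π q') := congrArg Subtype.val (congrArg Prod.snd h)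
      rw [h1] at h2
      exact sub_left_inj.mp h2
    exact Finite.of_injective _ hg
  haveI := hB
  -- Step C : I ⧸ L (i.e. the image ideal) is finite
  have hmk2 := Ideal.Quotient.mk_surjective (I := L.colon I)
  set out2 := Function.surjInv hmk2 with hout2def
  have hout2 : ∀ q, Ideal.Quotient.mk (L.colon I) (out2 q) = q := Function.surjInv_eq hmk2
  have hmem : ∀ c : s → R ⧸ L.colon I, (∑ i ∈ s.attach, out2 (c i) * (i : R)) ∈ I :=
    fun c => Ideal.sum_mem _ fun i _ => I.mul_mem_left _ (hsI i i.2)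
  have hC : Finite (I.map (Ideal.Quotient.mk L)) := by
    have hφ : Function.Surjective (fun c : s → R ⧸ L.colon I =>
        (⟨Ideal.Quotient.mk L (∑ i ∈ s.attach, out2 (c i) * (i : R)),
          Ideal.mem_map_of_mem _ (hmem c)⟩ : I.map (Ideal.Quotient.mk L))) := by
      rintro ⟨y, hy⟩
      obtain ⟨w, hwI, rfl⟩ :=
        (Ideal.mem_map_iff_of_surjective _ Ideal.Quotient.mk_surjective).mp hy
      rw [← hs] at hwI
      obtain ⟨f, -, hf⟩ := Submodule.mem_span_finset.mp hwI
      refine ⟨fun i => Ideal.Quotient.mk _ (f i), Subtype.ext ?_⟩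
      show Ideal.Quotient.mk L _ = Ideal.Quotient.mk L w
      rw [Ideal.Quotient.eq]
      have hw : ∑ i ∈ s.attach, f (i : R) * (i : R) = w := by
        rw [Finset.sum_attach s (fun i => f i * i), ← hf]
        simp [smul_eq_mul]
      have hdiff : (∑ i ∈ s.attach, out2 (Ideal.Quotient.mk (L.colon I) (f i)) * (i : R)) - w
          = ∑ i ∈ s.attach,
              (out2 (Ideal.Quotient.mk (L.colon I) (f i)) - f (i : R)) * (i : R) := by
        rw [← hw, ← Finset.sum_sub_distrib]
        simp [sub_mul]
      rw [hdiff]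
      refine Ideal.sum_mem _ fun i _ => ?_
      have hcol : out2 (Ideal.Quotient.mk (L.colon I) (f i)) - f (i : R) ∈ L.colon I :=
        Ideal.Quotient.eq.mp (hout2 (Ideal.Quotient.mk (L.colon I) (f i)))
      exact Submodule.mem_colon.mp hcol _ (hsI i i.2)
    exact Finite.of_surjective _ hφ
  haveI := hC
  haveI : Finite (J.map (Ideal.Quotient.mk L)) :=
    Finite.of_injective (Submodule.inclusion (Ideal.map_mono hJI))
      (Submodule.inclusion_injective _)
  exact not_finite (J.map (Ideal.Quotient.mk L))
end

section
/- Let R be a commutative ring, d ≥ 2, and let E_d(R) ≤ SL_d(R) be the subgroup generated by elementary matrices, acting on R^d by matrix multiplication. A subgroup Δ of the additive group R^d is E_d(R)-invariant if and only if Δ = I^d for some ideal I of R. -/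
lemma transvection_mulVec_eq {R : Type*} [CommRing R] {d : ℕ} (i j : Fin d) (r : R)
    (v : Fin d → R) :
    (Matrix.transvection i j r).mulVec v = v + Pi.single i (r * v j) := by
  rw [Matrix.transvection, Matrix.add_mulVec, Matrix.one_mulVec,
    Matrix.single_mulVec]
  rfl

theorem invariant_subgroups_of_Rd (R : Type*) [CommRing R] (d : ℕ) (hd : 2 ≤ d)
    (Δ : AddSubgroup (Fin d → R)) :
    (∀ i j : Fin d, i ≠ j → ∀ r : R, ∀ v ∈ Δ, (Matrix.transvection i j r).mulVec v ∈ Δ) ↔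
      ∃ I : Ideal R, ∀ v : Fin d → R, v ∈ Δ ↔ ∀ i, v i ∈ I := by
  constructor
  · intro h
    -- key: for v ∈ Δ, any i j r, Pi.single i (r * v j) ∈ Δ
    have key : ∀ v ∈ Δ, ∀ (i j : Fin d) (r : R), Pi.single i (r * v j) ∈ Δ := by
      have key' : ∀ v ∈ Δ, ∀ (i j : Fin d), i ≠ j → ∀ r : R,
          Pi.single i (r * v j) ∈ Δ := by
        intro v hv i j hij r
        have := h i j hij r v hv
        rw [transvection_mulVec_eq] at this
        have := Δ.sub_mem this hv
        simpa using this
      intro v hv i j r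
      rcases eq_or_ne i j with rfl | hij
      · haveI : Nontrivial (Fin d) := Fin.nontrivial_iff_two_le.mpr hd
        obtain ⟨k, hk⟩ := exists_ne i
        have h1 : Pi.single k ((1 : R) * v i) ∈ Δ := key' v hv k i hk 1
        have h2 := key' _ h1 i k hk.symm r
        simpa using h2
      · exact key' v hv i j hij r
    have z0 : (0 : ℕ) < d := lt_of_lt_of_le (by norm_num) hd
    let i₀ : Fin d := ⟨0, z0⟩
    refine ⟨{
      carrier := {r : R | Pi.single i₀ r ∈ Δ}
      zero_mem' := by simpa using Δ.zero_mem
      add_mem' := by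
        intro a b ha hb
        have := Δ.add_mem ha hb
        rwa [← Pi.single_add] at this
      smul_mem' := by
        intro c x hx
        have := key _ hx i₀ i₀ c
        simpa using this }, ?_⟩
    intro v
    constructor
    · intro hv i
      have := key v hv i₀ i 1
      simpa using this
    · intro hv
      have hsingle : ∀ i : Fin d, Pi.single i (v i) ∈ Δ := by
        intro i
        have := key _ (hv i) i i₀ 1
        simpa using this
      have : (∑ i : Fin d, Pi.single i (v i)) ∈ Δ :=
        Δ.sum_mem fun i _ => hsingle i
      simpa [Finset.univ_sum_single] using this
  · rintro ⟨I, hI⟩ i j hij r v hv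
    rw [transvection_mulVec_eq, hI]
    intro k
    rcases eq_or_ne k i with rfl | hk
    · simpa using I.add_mem ((hI v).1 hv k) (I.mul_mem_left r ((hI v).1 hv j))
    · simpa [Pi.single_apply, hk] using (hI v).1 hv k
end

section
/- Let R be a commutative ring, d ≥ 3, and K ⊆ F ideals of R with F^2 ⊆ K. Then the map ι sending g ∈ SL_d(R) with g ≡ Id mod F (entrywise, i.e. g - Id has all entries in F) to the class of g - Id in M_d(R/K) is a group homomorphism from the congruence subgroup SL_d(F) to the additive group of trace-zero matrices over R/K, with kernel SL_d(K). -/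
open Matrix Finset

lemma prod_one_add_sub_mem {R : Type*} [CommRing R] (K F : Ideal R) (hF2 : F * F ≤ K)
    {ι : Type*} [DecidableEq ι] (s : Finset ι) (f : ι → R) (hf : ∀ i ∈ s, f i ∈ F) :
    (∏ i ∈ s, (1 + f i)) - 1 - ∑ i ∈ s, f i ∈ K := by
  induction s using Finset.induction with
  | empty => simpa using K.zero_mem
  | @insert a s ha ih =>
    rw [Finset.prod_insert ha, Finset.sum_insert ha]
    have hP := ih (fun i hi => hf i (Finset.mem_insert_of_mem hi))
    have hS : (∑ i ∈ s, f i) ∈ F := Ideal.sum_mem _ (fun i hi => hf i (Finset.mem_insert_of_mem hi))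
    have key : (1 + f a) * ∏ i ∈ s, (1 + f i) - 1 - (f a + ∑ i ∈ s, f i)
        = (1 + f a) * ((∏ i ∈ s, (1 + f i)) - 1 - ∑ i ∈ s, f i) + f a * ∑ i ∈ s, f i := by ring
    rw [key]
    exact K.add_mem (Ideal.mul_mem_left _ _ hP) (hF2 (Ideal.mul_mem_mul (hf a (Finset.mem_insert_self a s)) hS))

lemma det_one_add_sub_mem {R : Type*} [CommRing R] (K F : Ideal R) (hF2 : F * F ≤ K)
    {n : ℕ} (A : Matrix (Fin n) (Fin n) R) (hA : ∀ i j, A i j ∈ F) :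
    (1 + A).det - 1 - A.trace ∈ K := by
  rw [Matrix.det_apply]
  rw [← Finset.sum_erase_add _ _ (Finset.mem_univ (1 : Equiv.Perm (Fin n)))]
  have h1 : (Equiv.Perm.sign (1 : Equiv.Perm (Fin n))) • ∏ i, (1 + A) ((1 : Equiv.Perm (Fin n)) i) i
      = ∏ i, (1 + A i i) := by
    simp [Matrix.add_apply, Matrix.one_apply]
  rw [h1]
  have h2 : ∀ σ ∈ (Finset.univ.erase (1 : Equiv.Perm (Fin n))),
      (Equiv.Perm.sign σ) • ∏ i, (1 + A) (σ i) i ∈ K := by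
    intro σ hσ
    have hσ1 : σ ≠ 1 := (Finset.mem_erase.mp hσ).1
    -- find two points moved by σ
    obtain ⟨i, hi⟩ : ∃ i, σ i ≠ i := by
      by_contra h
      push_neg at h
      exact hσ1 (Equiv.ext h)
    have hj : σ (σ i) ≠ σ i ∨ ∃ j, j ≠ i ∧ σ j ≠ j := by
      by_cases h : σ (σ i) = σ i
      · exact Or.inr ⟨σ i, fun he => hi (he ▸ h), by rw [h]; exact fun he => hi (σ.injective (h.trans he.symm)) ⟩
      · exact Or.inl h
    obtain ⟨j, hji, hjm⟩ : ∃ j, j ≠ i ∧ σ j ≠ j := by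
      rcases hj with h | h
      · exact ⟨σ i, fun he => hi he, h⟩
      · exact h
    have hprod : (∏ k, (1 + A) (σ k) k) ∈ K := by
      rw [← Finset.mul_prod_erase _ _ (Finset.mem_univ i),
        ← Finset.mul_prod_erase _ _ (Finset.mem_erase.mpr ⟨hji, Finset.mem_univ j⟩)]
      have e1 : (1 + A) (σ i) i = A (σ i) i := by
        simp [Matrix.add_apply, Matrix.one_apply_ne hi]
      have e2 : (1 + A) (σ j) j = A (σ j) j := by
        simp [Matrix.add_apply, Matrix.one_apply_ne hjm]
      rw [e1, e2]
      exact hF2 (Ideal.mul_mem_mul (hA _ _) (Ideal.mul_mem_right _ _ (hA _ _)))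
    rcases Int.units_eq_one_or (Equiv.Perm.sign σ) with h | h
    · rw [h, one_smul]; exact hprod
    · rw [h, Units.neg_smul, one_smul]; exact K.neg_mem hprod
  have hsum : (∑ σ ∈ Finset.univ.erase (1 : Equiv.Perm (Fin n)),
      (Equiv.Perm.sign σ) • ∏ i, (1 + A) (σ i) i) ∈ K := Ideal.sum_mem _ h2
  have := prod_one_add_sub_mem K F hF2 Finset.univ (fun i => A i i) (fun i _ => hA i i)
  have goal : (∑ σ ∈ Finset.univ.erase (1 : Equiv.Perm (Fin n)),
      (Equiv.Perm.sign σ) • ∏ i, (1 + A) (σ i) i) + (∏ i, (1 + A i i)) - 1 - A.trace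
      = (∑ σ ∈ Finset.univ.erase (1 : Equiv.Perm (Fin n)),
      (Equiv.Perm.sign σ) • ∏ i, (1 + A) (σ i) i) + ((∏ i, (1 + A i i)) - 1 - ∑ i, A i i) := by
    rw [Matrix.trace]; ring_nf; rfl
  rw [goal]
  exact K.add_mem hsum this
theorem congruence_iota_hom (R : Type*) [CommRing R] (d : ℕ) (hd : 3 ≤ d)
    (K F : Ideal R) (hKF : K ≤ F) (hF2 : F * F ≤ K) :
    ∀ g h : Matrix.SpecialLinearGroup (Fin d) R,
      (∀ i j : Fin d, ((g : Matrix (Fin d) (Fin d) R) - 1) i j ∈ F) →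
      (∀ i j : Fin d, ((h : Matrix (Fin d) (Fin d) R) - 1) i j ∈ F) →
      (Matrix.trace (((g : Matrix (Fin d) (Fin d) R) - 1).map (Ideal.Quotient.mk K)) = 0 ∧
        (((g * h : Matrix.SpecialLinearGroup (Fin d) R) : Matrix (Fin d) (Fin d) R) - 1).map
            (Ideal.Quotient.mk K) =
          ((g : Matrix (Fin d) (Fin d) R) - 1).map (Ideal.Quotient.mk K) +
            ((h : Matrix (Fin d) (Fin d) R) - 1).map (Ideal.Quotient.mk K) ∧
        (((g : Matrix (Fin d) (Fin d) R) - 1).map (Ideal.Quotient.mk K) = 0 ↔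
          ∀ i j : Fin d, ((g : Matrix (Fin d) (Fin d) R) - 1) i j ∈ K)) := by
  intro g h hg hh
  set A : Matrix (Fin d) (Fin d) R := (g : Matrix (Fin d) (Fin d) R) - 1 with hAdef
  set B : Matrix (Fin d) (Fin d) R := (h : Matrix (Fin d) (Fin d) R) - 1 with hBdef
  refine ⟨?_, ?_, ?_⟩
  · -- trace
    have hdet : (1 + A).det = 1 := by
      rw [hAdef, add_sub_cancel]; exact g.2
    have htr : A.trace ∈ K := by
      have := det_one_add_sub_mem K F hF2 A hg
      rw [hdet] at this
      simpa using K.neg_mem this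
    have : Matrix.trace (A.map (Ideal.Quotient.mk K)) = Ideal.Quotient.mk K A.trace := by
      simp [Matrix.trace, Matrix.diag, Matrix.map_apply, map_sum]
    rw [this, Ideal.Quotient.eq_zero_iff_mem]
    exact htr
  · -- additivity
    have hgh : ((g * h : Matrix.SpecialLinearGroup (Fin d) R) : Matrix (Fin d) (Fin d) R) - 1
        = A * B + A + B := by
      rw [Matrix.SpecialLinearGroup.coe_mul, hAdef, hBdef]
      noncomm_ring
    ext i j
    simp only [hgh, Matrix.map_apply, Matrix.add_apply]
    have hAB : (A * B) i j ∈ K := by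
      rw [Matrix.mul_apply]
      exact Ideal.sum_mem _ fun k _ => hF2 (Ideal.mul_mem_mul (hg i k) (hh k j))
    rw [map_add, map_add, Ideal.Quotient.eq_zero_iff_mem.mpr hAB, zero_add]
  · constructor
    · intro h0 i j
      have := congrFun (congrFun h0 i) j
      simpa [Matrix.map_apply, Ideal.Quotient.eq_zero_iff_mem] using this
    · intro hk
      ext i j
      simpa [Matrix.map_apply, Ideal.Quotient.eq_zero_iff_mem] using hk i j
end

section
/- Let R be a commutative ring and d ≥ 2. For a unit u ∈ R with u^d = 1, the scalar matrix u·Id lies in the subgroup E_d(R) generated by elementary matrices. Consequently Z(SL_d(R)) ≤ E_d(R). -/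
open Matrix

set_option maxHeartbeats 1000000 in
private lemma six_transvection_eq {R : Type*} [CommRing R] {n : Type*} [DecidableEq n] [Fintype n]
    {i j : n} (hij : i ≠ j) (a : Rˣ) :
    transvection i j (a:R) * transvection j i (-(↑a⁻¹:R)) * transvection i j (a:R) *
      transvection i j (-1) * transvection j i 1 * transvection i j (-1) =
    diagonal (fun k => if k = i then (a:R) else if k = j then (↑a⁻¹:R) else 1) := by
  have e1 : ∀ c e : R, single i j c * single i j e = 0 :=
    fun c e => single_mul_single_of_ne (c := c) i j i hij.symm e
  have e2 : ∀ c e : R, single j i c * single j i e = 0 :=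
    fun c e => single_mul_single_of_ne (c := c) j i j hij e
  have e3 : ∀ c e : R, single i j c * single j i e = single i i (c*e) :=
    fun c e => single_mul_single_same (c := c) i j i e
  have e4 : ∀ c e : R, single j i c * single i j e = single j j (c*e) :=
    fun c e => single_mul_single_same (c := c) j i j e
  have e5 : ∀ c e : R, single i i c * single i j e = single i j (c*e) :=
    fun c e => single_mul_single_same (c := c) i i j e
  have e6 : ∀ c e : R, single i i c * single j i e = 0 :=
    fun c e => single_mul_single_of_ne (c := c) i i j hij e
  have e7 : ∀ c e : R, single j j c * single i j e = 0 :=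
    fun c e => single_mul_single_of_ne (c := c) j j i hij.symm e
  have e8 : ∀ c e : R, single j j c * single j i e = single j i (c*e) :=
    fun c e => single_mul_single_same (c := c) j j i e
  simp only [transvection, add_mul, mul_add, one_mul, mul_one, mul_assoc,
    e1, e2, e3, e4, e5, e6, e7, e8, mul_zero, zero_mul, add_zero, zero_add]
  clear e1 e2 e3 e4 e5 e6 e7 e8
  have hai : (↑a : R) * ↑a⁻¹ = 1 := a.mul_inv
  have hia : (↑a⁻¹ : R) * ↑a = 1 := a.inv_mul
  ext k l
  simp only [Matrix.add_apply, Matrix.one_apply, Matrix.diagonal_apply,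
    Matrix.single, Matrix.of_apply]
  split_ifs <;> (try subst_vars) <;> (try simp_all) <;>
    first
      | ring1
      | linear_combination -(↑a : R) * hai
      | (exact absurd (‹i = k ∧ i = l›.1.symm.trans ‹i = k ∧ i = l›.2) ‹¬k = l›)
      | (exact absurd (‹i = k ∧ i = l›.2.symm.trans ‹i = k ∧ i = l›.1) ‹¬l = k›)
      | (exact absurd (‹j = k ∧ j = l›.1.symm.trans ‹j = k ∧ j = l›.2) ‹¬k = l›)
      | (exact absurd (‹j = k ∧ j = l›.2.symm.trans ‹j = k ∧ j = l›.1) ‹¬l = k›)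
      | exact absurd ‹j = i› (Ne.symm hij)

theorem scalar_matrix_mem_elementary (R : Type*) [CommRing R] (d : ℕ) (hd : 2 ≤ d)
    (E : Subgroup (Matrix.SpecialLinearGroup (Fin d) R))
    (hE : E = Subgroup.closure {A : Matrix.SpecialLinearGroup (Fin d) R |
      ∃ (i j : Fin d) (c : R), i ≠ j ∧
        (A : Matrix (Fin d) (Fin d) R) = Matrix.transvection i j c}) :
    (∀ u : Rˣ, (u : R) ^ d = 1 →
      ∀ S : Matrix.SpecialLinearGroup (Fin d) R,
        (S : Matrix (Fin d) (Fin d) R) = (u : R) • (1 : Matrix (Fin d) (Fin d) R) →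
        S ∈ E) ∧
    Subgroup.center (Matrix.SpecialLinearGroup (Fin d) R) ≤ E := by
  -- diagonal matrices D_{ij}(a) are in E
  have hD : ∀ (i j : Fin d) (hij : i ≠ j) (a : Rˣ),
      ∃ T : Matrix.SpecialLinearGroup (Fin d) R, T ∈ E ∧
        (T : Matrix (Fin d) (Fin d) R) =
          diagonal (fun k => if k = i then (a:R) else if k = j then (↑a⁻¹:R) else 1) := by
    intro i j hij a
    let t : Fin d → Fin d → R → Matrix.SpecialLinearGroup (Fin d) R := fun i' j' c =>
      if h : i' ≠ j' then ⟨Matrix.transvection i' j' c, det_transvection_of_ne i' j' h c⟩ else 1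
    have ht : ∀ (i' j' : Fin d) (h : i' ≠ j') (c : R),
        (t i' j' c : Matrix (Fin d) (Fin d) R) = Matrix.transvection i' j' c := by
      intro i' j' h c; exact congrArg Subtype.val (dif_pos h)
    have htm : ∀ (i' j' : Fin d) (c : R), i' ≠ j' → t i' j' c ∈ E := by
      intro i' j' c h
      rw [hE]
      exact Subgroup.subset_closure ⟨i', j', c, h, ht i' j' h c⟩
    refine ⟨t i j (a:R) * t j i (-(↑a⁻¹:R)) * t i j (a:R) * t i j (-1) * t j i 1 * t i j (-1),
      mul_mem (mul_mem (mul_mem (mul_mem (mul_mem (htm _ _ _ hij) (htm _ _ _ hij.symm))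
        (htm _ _ _ hij)) (htm _ _ _ hij)) (htm _ _ _ hij.symm)) (htm _ _ _ hij), ?_⟩
    simp only [Matrix.SpecialLinearGroup.coe_mul, ht i j hij, ht j i hij.symm]
    exact six_transvection_eq hij a
  have part1 : ∀ u : Rˣ, (u : R) ^ d = 1 →
      ∀ S : Matrix.SpecialLinearGroup (Fin d) R,
        (S : Matrix (Fin d) (Fin d) R) = (u : R) • (1 : Matrix (Fin d) (Fin d) R) →
        S ∈ E := by
    intro u hu S hS
    have hu' : u ^ d = 1 := Units.ext (by rw [Units.val_pow_eq_pow_val]; exact hu)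
    -- induction: partial products are diagonal matrices
    have key : ∀ m : ℕ, m + 1 < d →
        ∃ T : Matrix.SpecialLinearGroup (Fin d) R, T ∈ E ∧
          (T : Matrix (Fin d) (Fin d) R) = diagonal (fun k : Fin d =>
            if (k : ℕ) < m + 1 then (u : R)
            else if (k : ℕ) = m + 1 then (↑(u ^ (m + 1))⁻¹ : R) else 1) := by
      intro m
      induction m with
      | zero =>
        intro h1
        obtain ⟨T, hTm, hTc⟩ := hD ⟨0, by omega⟩ ⟨1, h1⟩
          (by simp [Fin.ext_iff]) u
        refine ⟨T, hTm, hTc.trans (congrArg Matrix.diagonal (funext fun k => ?_))⟩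
        simp only [Fin.ext_iff]
        split_ifs <;> simp_all <;> omega
      | succ p ih =>
        intro h2
        obtain ⟨T, hTm, hTc⟩ := ih (by omega)
        obtain ⟨T', hTm', hTc'⟩ := hD ⟨p + 1, by omega⟩ ⟨p + 2, by omega⟩
          (by simp [Fin.ext_iff]) (u ^ (p + 2))
        refine ⟨T * T', mul_mem hTm hTm', ?_⟩
        rw [Matrix.SpecialLinearGroup.coe_mul, hTc, hTc', diagonal_mul_diagonal]
        refine congrArg Matrix.diagonal (funext fun k => ?_)
        have hnorm : p + 1 + 1 = p + 2 := rfl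
        simp only [hnorm, Fin.ext_iff]
        split_ifs <;>
          first
            | rfl
            | omega
            | (rw [← Units.val_mul]; exact congrArg Units.val (by group))
            | simp
    obtain ⟨T, hTm, hTc⟩ := key (d - 2) (by omega)
    have hinv : (u ^ (d - 2 + 1))⁻¹ = u := by
      apply inv_eq_of_mul_eq_one_left
      rw [← pow_succ']
      rw [show d - 2 + 1 + 1 = d by omega]
      exact hu'
    have hmat : (↑u : R) • (1 : Matrix (Fin d) (Fin d) R) = diagonal (fun k : Fin d =>
        if (k:ℕ) < d - 2 + 1 then (u:R) else if (k:ℕ) = d - 2 + 1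
          then (↑(u ^ (d - 2 + 1))⁻¹ : R) else 1) := by
      ext k l
      rcases eq_or_ne k l with rfl | hkl
      · rcases lt_or_ge (k : ℕ) (d - 2 + 1) with h | h
        · simp [h, smul_eq_mul]; intro h'; omega
        · have h1 : (k : ℕ) = d - 2 + 1 := by omega
          have h2 : ¬ ((k : ℕ) < d - 2 + 1) := by omega
          simp [h1, h2, hinv, smul_eq_mul]
      · simp [Matrix.diagonal_apply_ne _ hkl, Matrix.one_apply_ne hkl]
    have hST : S = T := Subtype.coe_injective (by show (S : Matrix (Fin d) (Fin d) R) = (T : Matrix (Fin d) (Fin d) R); rw [hS, hTc, hmat])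
    rw [hST]
    exact hTm
  refine ⟨part1, fun x hx => ?_⟩
  obtain ⟨r, hr, hs⟩ := Matrix.SpecialLinearGroup.mem_center_iff.mp hx
  have hrd : r ^ d = 1 := by simpa using hr
  have hmul : r * r ^ (d - 1) = 1 := by
    rw [← pow_succ', show d - 1 + 1 = d by omega]; exact hrd
  have hmul' : r ^ (d - 1) * r = 1 := by
    rw [← pow_succ, show d - 1 + 1 = d by omega]; exact hrd
  refine part1 ⟨r, r ^ (d - 1), hmul, hmul'⟩ hrd x ?_
  rw [← hs, Matrix.scalar_apply]
  ext k l
  rcases eq_or_ne k l with rfl | hkl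
  · simp [smul_eq_mul]
  · simp [Matrix.diagonal_apply_ne _ hkl, Matrix.one_apply_ne hkl]
end
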